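/- Let h(m_t) = K P_s / (m + (β-1) m_t) - α m / (2 m_t P_s) for real m_t > 0, with constants K, P_s, α, m > 0 and β > 1. Then h is maximized at m_t* = m√(αm) / (√(2K(β-1)) P_s - √(αm)(β-1)), provided √(2K(β-1)) P_s > √(αm)(β-1). -/

import Mathlib

/-!
Write `c = β - 1`, `αm = a²` and `2K(β - 1) = b²`, and put `d = b P_s - a c`. Then
`h(x) = d² / (2 m c P_s) - (d x - a m)² / (2 P_s m x (m + c x))`,
so `h ≤ d² / (2 m c P_s)` on `x > 0`, with equality exactly where `d x = a m`.
-/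

section Reparametrized

variable {a b c p m x : ℝ}

theorem sq_div_sub_sq_div_eq (hc : c ≠ 0) (hp : p ≠ 0) (hm : m ≠ 0) (hx : x ≠ 0)
    (hmx : m + c * x ≠ 0) :
    b ^ 2 * p / (2 * c * (m + c * x)) - a ^ 2 / (2 * x * p) =
      (b * p - a * c) ^ 2 / (2 * m * c * p) -
        ((b * p - a * c) * x - a * m) ^ 2 / (2 * p * m * x * (m + c * x)) := by
  field_simp
  ring

theorem sq_div_sub_sq_div_le (hc : 0 < c) (hp : 0 < p) (hm : 0 < m) (hx : 0 < x) :
    b ^ 2 * p / (2 * c * (m + c * x)) - a ^ 2 / (2 * x * p) ≤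
      (b * p - a * c) ^ 2 / (2 * m * c * p) := by
  rw [sq_div_sub_sq_div_eq hc.ne' hp.ne' hm.ne' hx.ne' (by positivity)]
  exact sub_le_self _ (by positivity)

theorem sq_div_sub_sq_div_at_critical (ha : a ≠ 0) (hb : b ≠ 0) (hc : c ≠ 0) (hp : p ≠ 0)
    (hm : m ≠ 0) (hd : b * p - a * c ≠ 0) :
    b ^ 2 * p / (2 * c * (m + c * (m * a / (b * p - a * c)))) -
        a ^ 2 / (2 * (m * a / (b * p - a * c)) * p) =
      (b * p - a * c) ^ 2 / (2 * m * c * p) := by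
  have hmx : m + c * (m * a / (b * p - a * c)) = m * b * p / (b * p - a * c) := by
    rw [eq_div_iff hd, add_mul, mul_assoc c, div_mul_cancel₀ _ hd]
    ring
  rw [sq_div_sub_sq_div_eq hc hp hm (by positivity) (by rw [hmx]; positivity)]
  field_simp
  ring

end Reparametrized

/-- `h(m_t) = K P_s/(m + (β-1)m_t) - α m/(2 m_t P_s)` is maximized over
`m_t > 0` at `m_t* = m√(αm)/(√(2K(β-1)) P_s - √(αm)(β-1))`. -/
theorem stmt_7 (K Ps α m β : ℝ) (hK : 0 < K) (hPs : 0 < Ps) (hα : 0 < α)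
    (hm : 0 < m) (hβ : 1 < β)
    (hpos : Real.sqrt (α * m) * (β - 1) < Real.sqrt (2 * K * (β - 1)) * Ps)
    (h : ℝ → ℝ)
    (hh : ∀ x, h x = K * Ps / (m + (β - 1) * x) - α * m / (2 * x * Ps)) :
    ∀ x : ℝ, 0 < x →
      h x ≤ h (m * Real.sqrt (α * m) /
        (Real.sqrt (2 * K * (β - 1)) * Ps - Real.sqrt (α * m) * (β - 1))) := by
  intro x hx
  have hc : 0 < β - 1 := sub_pos.mpr hβ
  set a := Real.sqrt (α * m)
  set b := Real.sqrt (2 * K * (β - 1))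
  have ha : 0 < a := Real.sqrt_pos.mpr (by positivity)
  have hb : 0 < b := Real.sqrt_pos.mpr (by positivity)
  have hh' : ∀ y,
      h y = b ^ 2 * Ps / (2 * (β - 1) * (m + (β - 1) * y)) - a ^ 2 / (2 * y * Ps) := by
    intro y
    rw [hh, Real.sq_sqrt (by positivity), Real.sq_sqrt (by positivity), mul_right_comm 2 K,
      mul_assoc, mul_assoc, mul_div_mul_left _ _ (by positivity)]
  rw [hh', hh', sq_div_sub_sq_div_at_critical ha.ne' hb.ne' hc.ne' hPs.ne' hm.ne'
    (sub_pos.mpr hpos).ne']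
  exact sq_div_sub_sq_div_le hc hPs hm hx
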